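/- arXiv:1509.09286 — 5 statements merged into one kernel-verified Lean document; each statement's English description precedes it below -/
import Mathlib

section
/- With aᵢ² = i^{−(2α+1)} and σᵢ² = i^{2β} for α > 0, β > −1/2, the quantity d_o(n) = max{k ∈ ℕ : Σ_{i=1}^{k} i^β (k^{2α+β+1} − i^{2α+β+1}) ≤ n} satisfies d_o(n) ∼ B_o · n^{1/(2α+2β+2)} as n → ∞, where B_o = (2(β+1)(α+β+1)/(2α+β+1))^{1/(2α+2β+2)}. -/
/-!
Comparing sums with integrals gives `∑_{i ≤ k} i^r ∼ k^(r+1)/(r+1)` for `r > -1`, so the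
constraint sum `S k = k^p ∑ i^β - ∑ i^(p+β)` (with `p = 2α+β+1`) satisfies `S k ∼ C k^q` with
`q = 2α+2β+2` and `C = 1/(β+1) - 1/q = 1/B_o^q`. The maximal `d` with `S d ≤ n` is squeezed by
`S d ≤ n < S (d+1)`, and `(d+1)^q / d^q → 1`, hence `n ∼ C d^q`, i.e. `d ∼ (n/C)^(1/q)`.
-/

open Filter Finset Topology

theorem Finset.sum_Icc_one_eq_sum_range {M : Type*} [AddCommMonoid M] (f : ℕ → M) (k : ℕ) :
    ∑ i ∈ Icc 1 k, f i = ∑ i ∈ range k, f (i + 1) := by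
  induction k with
  | zero => simp
  | succ k ih => rw [sum_Icc_succ_top (by omega), ih, sum_range_succ]

theorem tendsto_natCast_add_one_rpow_div_rpow (q : ℝ) :
    Tendsto (fun k : ℕ => ((k : ℝ) + 1) ^ q / (k : ℝ) ^ q) atTop (𝓝 1) := by
  have h : Tendsto (fun k : ℕ => (1 + 1 / (k : ℝ)) ^ q) atTop (𝓝 1) := by
    simpa using (tendsto_one_div_atTop_nhds_zero_nat.const_add 1).rpow_const
      (p := q) (Or.inl (by norm_num))
  refine h.congr' ?_
  filter_upwards [eventually_gt_atTop 0] with k hk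
  have hk' : (0 : ℝ) < k := Nat.cast_pos.2 hk
  rw [one_add_div hk'.ne', Real.div_rpow (by positivity) hk'.le]

section SumRpow

variable {r : ℝ}

theorem sub_one_div_le_sum_Icc_rpow (hr : -1 < r) (k : ℕ) :
    ((k : ℝ) ^ (r + 1) - 1) / (r + 1) ≤ ∑ i ∈ Icc 1 k, (i : ℝ) ^ r := by
  have hr1 : 0 < r + 1 := by linarith
  rw [sum_Icc_one_eq_sum_range]
  push_cast
  rcases le_or_gt 0 r with hr0 | hr0
  · have h := MonotoneOn.integral_le_sum (x₀ := 0) (a := k) (f := fun x : ℝ => x ^ r)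
      fun x hx y _ hxy => Real.rpow_le_rpow hx.1 hxy hr0
    simp only [zero_add, integral_rpow (Or.inl hr), Real.zero_rpow hr1.ne'] at h
    push_cast at h
    calc _ ≤ ((k : ℝ) ^ (r + 1) - 0) / (r + 1) := by gcongr; norm_num
      _ ≤ _ := h
  · have h := AntitoneOn.integral_le_sum (x₀ := 1) (a := k) (f := fun x : ℝ => x ^ r)
      fun x hx y _ hxy => Real.rpow_le_rpow_of_nonpos (by linarith [hx.1]) hxy hr0.le
    rw [integral_rpow (Or.inl hr), Real.one_rpow] at h
    calc _ ≤ ((1 + k : ℝ) ^ (r + 1) - 1) / (r + 1) := by gcongr; linarith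
      _ ≤ _ := h.trans_eq (by simp only [add_comm])

theorem sum_Icc_rpow_le (hr : -1 < r) (k : ℕ) :
    ∑ i ∈ Icc 1 k, (i : ℝ) ^ r ≤ (((k : ℝ) + 1) ^ (r + 1) - 1) / (r + 1) + 1 := by
  rw [sum_Icc_one_eq_sum_range]
  push_cast
  rcases le_or_gt 0 r with hr0 | hr0
  · have h := MonotoneOn.sum_le_integral (x₀ := 1) (a := k) (f := fun x : ℝ => x ^ r)
      fun x hx y _ hxy => Real.rpow_le_rpow (by linarith [hx.1]) hxy hr0
    rw [integral_rpow (Or.inl hr), Real.one_rpow] at h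
    simp only [add_comm (1 : ℝ)] at h ⊢
    linarith
  · have h := AntitoneOn.sum_le_integral (x₀ := 1) (a := k) (f := fun x : ℝ => x ^ r)
      fun x hx y _ hxy => Real.rpow_le_rpow_of_nonpos (by linarith [hx.1]) hxy hr0.le
    rw [integral_rpow (Or.inl hr), Real.one_rpow] at h
    -- `x ^ r` is not antitone on `[0, 1]` (junk value `0 ^ r = 0`), so the first term `1 ^ r`
    -- is split off and the others are compared with the integral from `1`.
    have hshift := (sum_range_succ' (fun i : ℕ => ((i : ℝ) + 1) ^ r) k).symm.trans
      (sum_range_succ (fun i : ℕ => ((i : ℝ) + 1) ^ r) k)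
    have hlast : 0 ≤ ((k : ℝ) + 1) ^ r := by positivity
    push_cast at h hshift
    simp only [add_comm (1 : ℝ), add_assoc, one_add_one_eq_two, zero_add,
      Real.one_rpow] at h hshift ⊢
    linarith

theorem tendsto_sum_Icc_rpow_div_rpow (hr : -1 < r) :
    Tendsto (fun k : ℕ => (∑ i ∈ Icc 1 k, (i : ℝ) ^ r) / (k : ℝ) ^ (r + 1)) atTop
      (𝓝 (1 / (r + 1))) := by
  have hr1 : 0 < r + 1 := by linarith
  have hinv : Tendsto (fun k : ℕ => ((k : ℝ) ^ (r + 1))⁻¹) atTop (𝓝 0) :=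
    tendsto_inv_atTop_zero.comp ((tendsto_rpow_atTop hr1).comp tendsto_natCast_atTop_atTop)
  have hlower : Tendsto (fun k : ℕ => 1 / (r + 1) - ((k : ℝ) ^ (r + 1))⁻¹ / (r + 1)) atTop
      (𝓝 (1 / (r + 1))) := by
    simpa using (hinv.div_const (r + 1)).const_sub (1 / (r + 1))
  have hupper : Tendsto (fun k : ℕ => ((k : ℝ) + 1) ^ (r + 1) / (k : ℝ) ^ (r + 1) / (r + 1)
      + (1 - 1 / (r + 1)) * ((k : ℝ) ^ (r + 1))⁻¹) atTop (𝓝 (1 / (r + 1))) := by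
    simpa using ((tendsto_natCast_add_one_rpow_div_rpow (r + 1)).div_const (r + 1)).add
      (hinv.const_mul (1 - 1 / (r + 1)))
  refine tendsto_of_tendsto_of_tendsto_of_le_of_le' hlower hupper ?_ ?_ <;>
  filter_upwards [eventually_gt_atTop 0] with k hk <;>
  have hkr : 0 < (k : ℝ) ^ (r + 1) := by positivity
  · calc _ = ((k : ℝ) ^ (r + 1) - 1) / (r + 1) / (k : ℝ) ^ (r + 1) := by field_simp
      _ ≤ _ := by gcongr; exact sub_one_div_le_sum_Icc_rpow hr k
  · calc _ ≤ ((((k : ℝ) + 1) ^ (r + 1) - 1) / (r + 1) + 1) / (k : ℝ) ^ (r + 1) := by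
          gcongr; exact sum_Icc_rpow_le hr k
      _ = _ := by field_simp; ring

end SumRpow

theorem tendsto_sum_Icc_rpow_mul_sub_div_rpow {β p : ℝ} (hβ : -1 < β) (hpβ : -1 < p + β) :
    Tendsto (fun k : ℕ => (∑ i ∈ Icc 1 k, (i : ℝ) ^ β * ((k : ℝ) ^ p - (i : ℝ) ^ p)) /
      (k : ℝ) ^ (p + β + 1)) atTop (𝓝 (1 / (β + 1) - 1 / (p + β + 1))) := by
  refine ((tendsto_sum_Icc_rpow_div_rpow hβ).sub (tendsto_sum_Icc_rpow_div_rpow hpβ)).congr' ?_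
  filter_upwards [eventually_gt_atTop 0] with k hk
  have hk' : (0 : ℝ) < k := Nat.cast_pos.2 hk
  have hsplit : ∑ i ∈ Icc 1 k, (i : ℝ) ^ β * ((k : ℝ) ^ p - (i : ℝ) ^ p) =
      (k : ℝ) ^ p * ∑ i ∈ Icc 1 k, (i : ℝ) ^ β - ∑ i ∈ Icc 1 k, (i : ℝ) ^ (p + β) := by
    rw [mul_sum, ← sum_sub_distrib]
    refine sum_congr rfl fun i hi => ?_
    rw [Real.rpow_add (Nat.cast_pos.2 (mem_Icc.1 hi).1)]
    ring
  have hpow : (k : ℝ) ^ (p + β + 1) = (k : ℝ) ^ p * (k : ℝ) ^ (β + 1) := by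
    rw [← Real.rpow_add hk', add_assoc]
  rw [hsplit, hpow, sub_div, mul_div_mul_left _ _ (by positivity)]

section CountingInverse

variable {S : ℕ → ℝ}

theorem bddAbove_setOf_le_of_tendsto_atTop (hS : Tendsto S atTop atTop) (x : ℝ) :
    BddAbove {k | S k ≤ x} := by
  obtain ⟨K, hK⟩ := eventually_atTop.1 (hS.eventually_gt_atTop x)
  exact ⟨K, fun k hk => not_lt.1 fun hKk => (hK k hKk.le).not_ge hk⟩

theorem apply_sSup_setOf_le_le (hS : Tendsto S atTop atTop) {x : ℝ} (hx : S 0 ≤ x) :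
    S (sSup {k | S k ≤ x}) ≤ x :=
  Nat.sSup_mem ⟨0, hx⟩ (bddAbove_setOf_le_of_tendsto_atTop hS x)

theorem lt_apply_sSup_setOf_le_add_one (hS : Tendsto S atTop atTop) (x : ℝ) :
    x < S (sSup {k | S k ≤ x} + 1) :=
  not_le.1 <| notMem_of_csSup_lt (s := {k | S k ≤ x}) (Nat.lt_succ_self _)
    (bddAbove_setOf_le_of_tendsto_atTop hS x)

theorem tendsto_sSup_setOf_le_atTop (hS : Tendsto S atTop atTop) :
    Tendsto (fun x : ℝ => sSup {k | S k ≤ x}) atTop atTop :=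
  tendsto_atTop.2 fun K => (eventually_ge_atTop (S K)).mono fun x hx =>
    le_csSup (bddAbove_setOf_le_of_tendsto_atTop hS x) hx

theorem tendsto_div_rpow_of_le_of_lt {d : ℝ → ℕ} {L q : ℝ}
    (hS : Tendsto (fun k : ℕ => S k / (k : ℝ) ^ q) atTop (𝓝 L)) (hd : Tendsto d atTop atTop)
    (hle : ∀ᶠ x in atTop, S (d x) ≤ x) (hlt : ∀ᶠ x in atTop, x < S (d x + 1)) :
    Tendsto (fun x => x / (d x : ℝ) ^ q) atTop (𝓝 L) := by
  have hupper : Tendsto (fun x => S (d x + 1) / ((d x + 1 : ℕ) : ℝ) ^ q *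
      (((d x : ℝ) + 1) ^ q / (d x : ℝ) ^ q)) atTop (𝓝 L) := by
    simpa using (hS.comp (tendsto_add_atTop_nat 1 |>.comp hd)).mul
      ((tendsto_natCast_add_one_rpow_div_rpow q).comp hd)
  refine tendsto_of_tendsto_of_tendsto_of_le_of_le' (hS.comp hd) hupper ?_ ?_ <;>
  filter_upwards [hd.eventually_gt_atTop 0, hle, hlt] with x hx hle hlt <;>
  have hdx : (0 : ℝ) < (d x : ℝ) ^ q := by positivity
  · exact div_le_div_of_nonneg_right hle hdx.le
  · calc x / (d x : ℝ) ^ q ≤ S (d x + 1) / (d x : ℝ) ^ q := by gcongr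
      _ = _ := by push_cast; field_simp

theorem tendsto_sSup_setOf_le_div_rpow {B q : ℝ} (hB : 0 < B) (hq : 0 < q)
    (hS : Tendsto (fun k : ℕ => S k / (k : ℝ) ^ q) atTop (𝓝 (1 / B))) :
    Tendsto (fun x : ℝ => (sSup {k | S k ≤ x} : ℕ) / (B ^ (1 / q) * x ^ (1 / q))) atTop
      (𝓝 1) := by
  have hpow : Tendsto (fun k : ℕ => (k : ℝ) ^ q) atTop atTop :=
    (tendsto_rpow_atTop hq).comp tendsto_natCast_atTop_atTop
  have hStop : Tendsto S atTop atTop := by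
    refine (hS.pos_mul_atTop (by positivity) hpow).congr' ?_
    filter_upwards [eventually_gt_atTop 0] with k hk
    exact div_mul_cancel₀ _ (by positivity)
  set d : ℝ → ℕ := fun x => sSup {k | S k ≤ x}
  have hd := tendsto_sSup_setOf_le_atTop hStop
  have hratio : Tendsto (fun x => x / (d x : ℝ) ^ q) atTop (𝓝 (1 / B)) :=
    tendsto_div_rpow_of_le_of_lt hS hd
      ((eventually_ge_atTop (S 0)).mono fun x hx => apply_sSup_setOf_le_le hStop hx)
      (.of_forall (lt_apply_sSup_setOf_le_add_one hStop))
  have hlim : Tendsto (fun x => (1 / B / (x / (d x : ℝ) ^ q)) ^ (1 / q)) atTop (𝓝 1) := by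
    have h := ((tendsto_const_nhds (x := 1 / B)).div hratio (by positivity)).rpow_const
      (p := 1 / q) (Or.inl (by positivity))
    rwa [div_self (by positivity), Real.one_rpow] at h
  refine hlim.congr' ?_
  filter_upwards [hd.eventually_gt_atTop 0, eventually_gt_atTop 0] with x hdx hx
  rw [div_div_eq_mul_div, one_div_mul_eq_div, div_div,
    Real.div_rpow (by positivity) (by positivity), Real.mul_rpow hB.le hx.le, one_div,
    Real.rpow_rpow_inv (by positivity) hq.ne']

end CountingInverse

/-- Number of effectively measured coordinates for the Sobolev hyperrectangle:
d_o(n) = max{k : Σ_{i=1}^k i^β (k^{2α+β+1} − i^{2α+β+1}) ≤ n} satisfies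
d_o(n) ∼ B_o n^{1/(2α+2β+2)} with B_o = (2(β+1)(α+β+1)/(2α+β+1))^{1/(2α+2β+2)}. -/
theorem stmt8 (α β : ℝ) (hα : 0 < α) (hβ : -(1/2 : ℝ) < β)
    (dO : ℝ → ℕ)
    (hdO : ∀ n : ℝ, dO n = sSup {k : ℕ |
      ∑ i ∈ Finset.Icc 1 k, (i : ℝ) ^ β *
        ((k : ℝ) ^ (2*α + β + 1) - (i : ℝ) ^ (2*α + β + 1)) ≤ n}) :
    Tendsto (fun n : ℝ => (dO n : ℝ) /
        ((2*(β+1)*(α+β+1)/(2*α+β+1)) ^ (1/(2*α+2*β+2)) * n ^ (1/(2*α+2*β+2))))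
      atTop (nhds 1) := by
  have hS := tendsto_sum_Icc_rpow_mul_sub_div_rpow (p := 2 * α + β + 1) (β := β)
    (by linarith) (by linarith)
  have hq : 2 * α + β + 1 + β + 1 = 2 * α + 2 * β + 2 := by ring
  have hβ1 : 0 < β + 1 := by linarith
  have hαβ1 : 0 < α + β + 1 := by linarith
  have hp : 0 < 2 * α + β + 1 := by linarith
  have hq0 : 0 < 2 * α + 2 * β + 2 := by linarith
  rw [hq] at hS
  have hC : 1 / (β + 1) - 1 / (2 * α + 2 * β + 2) =
      1 / (2 * (β + 1) * (α + β + 1) / (2 * α + β + 1)) := by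
    field_simp
    ring
  rw [hC] at hS
  simp only [hdO]
  exact tendsto_sSup_setOf_le_div_rpow (by positivity) hq0 hS
end

section
/- Let α > 0 and β > −1/2. Then as n → ∞, Σ_{i=1}^{∞} i^{2β}/(n + i^{2α+2β+1}) ∼ B̄_H · n^{−2α/(2α+2β+1)}, where B̄_H = B(2α/(2α+2β+1), (2β+1)/(2α+2β+1))/(2α+2β+1) and B is the Euler beta function. -/
open Filter

noncomputable def eulerBeta (x y : ℝ) : ℝ :=
  ∫ t in (0:ℝ)..1, t ^ (x - 1) * (1 - t) ^ (y - 1)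

/-!
With `h = n^{-1/p}`, `p = 2α + 2β + 1`, each term is `i^{2β}/(n + i^p) = n^{-2α/p} · h f(i h)` for
`f x = x^{2β}/(1 + x^p)`, so the series is `n^{-2α/p}` times a Riemann sum of `f` with mesh `h`.
Writing that sum as the integral of the step function `f (h ⌈x/h⌉)`, dominated convergence
(the step function is bounded by `(x^{2β} + (x+1)^{2β})/(1 + x^p)`, integrable since `2β > -1` and
`2β - p < -1`) shows it tends to `∫₀^∞ f`, which the substitution `t = 1/(1 + x^p)` turns into
`B(2α/p, (2β+1)/p)/p`.
-/

open MeasureTheory Set Real Topology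

section RiemannSum

variable {h x : ℝ}

lemma mul_natCeil_div_mem_Icc (hh : 0 < h) (hx : 0 ≤ x) : h * ⌈x / h⌉₊ ∈ Icc x (x + h) := by
  constructor
  · rw [← div_le_iff₀' hh]
    exact Nat.le_ceil _
  · have := Nat.ceil_lt_add_one (div_nonneg hx hh.le)
    rw [div_add_one hh.ne', lt_div_iff₀ hh] at this
    linarith

lemma natCeil_div_eq_of_mem_Ioc (hh : 0 < h) {i : ℕ} (hx : x ∈ Ioc (i * h) ((i + 1) * h)) :
    ⌈x / h⌉₊ = i + 1 := by
  rw [Nat.ceil_eq_iff i.succ_ne_zero, Nat.succ_sub_one, lt_div_iff₀ hh, div_le_iff₀ hh]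
  exact_mod_cast hx

lemma monotone_natCast_mul (hh : 0 < h) : Monotone fun i : ℕ => (i : ℝ) * h :=
  fun _ _ hij => mul_le_mul_of_nonneg_right (Nat.cast_le.mpr hij) hh.le

lemma Ioi_zero_eq_iUnion_Ioc (hh : 0 < h) : Ioi (0 : ℝ) = ⋃ i : ℕ, Ioc (i * h) ((i + 1) * h) := by
  have hunb : ¬BddAbove (range fun i : ℕ => (i : ℝ) * h) := by
    rintro ⟨M, hM⟩
    obtain ⟨n, hn⟩ := exists_nat_gt (M / h)
    have := hM (mem_range_self n)
    rw [div_lt_iff₀ hh] at hn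
    linarith
  simpa using (iUnion_Ioc_map_succ_eq_Ioi (fun i => monotone_natCast_mul hh bot_le) hunb).symm

lemma pairwise_disjoint_Ioc_natCast_mul (hh : 0 < h) :
    Pairwise (Function.onFun Disjoint fun i : ℕ => Ioc ((i : ℝ) * h) ((i + 1) * h)) := by
  simpa using (monotone_natCast_mul hh).pairwise_disjoint_on_Ioc_succ

lemma measurable_comp_mul_natCeil_div (f : ℝ → ℝ) (h : ℝ) :
    Measurable fun x : ℝ => f (h * ⌈x / h⌉₊) :=
  (measurable_from_top (f := fun k : ℕ => f (h * k))).comp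
    (Nat.measurable_ceil.comp (measurable_id.div_const h))

lemma integral_Ioi_comp_mul_natCeil_div {f : ℝ → ℝ} (hh : 0 < h)
    (hint : IntegrableOn (fun x => f (h * ⌈x / h⌉₊)) (Ioi 0)) :
    ∫ x in Ioi 0, f (h * ⌈x / h⌉₊) = ∑' i : ℕ, h * f ((i + 1) * h) := by
  rw [Ioi_zero_eq_iUnion_Ioc hh] at hint ⊢
  rw [integral_iUnion (fun _ => measurableSet_Ioc) (pairwise_disjoint_Ioc_natCast_mul hh) hint]
  refine tsum_congr fun i => ?_
  have hconst : EqOn (fun x => f (h * ⌈x / h⌉₊)) (fun _ => f ((i + 1) * h))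
      (Ioc (i * h) ((i + 1) * h)) := fun x hx => by
    simp only [natCeil_div_eq_of_mem_Ioc hh hx, Nat.cast_add, Nat.cast_one, mul_comm h]
  rw [setIntegral_congr_fun measurableSet_Ioc hconst, setIntegral_const, Real.volume_real_Ioc,
    ← sub_mul, add_sub_cancel_left, one_mul, max_eq_left hh.le, smul_eq_mul]

lemma tendsto_mul_natCeil_div (hx : 0 ≤ x) :
    Tendsto (fun h : ℝ => h * ⌈x / h⌉₊) (𝓝[>] 0) (𝓝 x) := by
  have hupper : Tendsto (fun h : ℝ => x + h) (𝓝[>] 0) (𝓝 x) := by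
    simpa using tendsto_nhdsWithin_of_tendsto_nhds
      ((continuous_const_add x).tendsto (0 : ℝ))
  refine tendsto_of_tendsto_of_tendsto_of_le_of_le' tendsto_const_nhds hupper ?_ ?_ <;>
    filter_upwards [self_mem_nhdsWithin] with h hh
  exacts [(mul_natCeil_div_mem_Icc hh hx).1, (mul_natCeil_div_mem_Icc hh hx).2]

theorem tendsto_riemannSum_Ioi_of_dominated {f G : ℝ → ℝ} (hf : ∀ x ∈ Ioi (0 : ℝ), ContinuousAt f x)
    (hG : IntegrableOn G (Ioi 0))
    (hbound : ∀ h ∈ Ioc (0 : ℝ) 1, ∀ x ∈ Ioi (0 : ℝ), ‖f (h * ⌈x / h⌉₊)‖ ≤ G x) :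
    Tendsto (fun h => ∑' i : ℕ, h * f ((i + 1) * h)) (𝓝[>] 0) (𝓝 (∫ x in Ioi 0, f x)) := by
  have hbound_ae : ∀ᶠ h in 𝓝[>] (0 : ℝ),
      ∀ᵐ x ∂(volume.restrict (Ioi 0)), ‖f (h * ⌈x / h⌉₊)‖ ≤ G x := by
    filter_upwards [Ioc_mem_nhdsGT zero_lt_one] with h hh
    exact ae_restrict_of_forall_mem measurableSet_Ioi (hbound h hh)
  have hstep : Tendsto (fun h => ∫ x in Ioi 0, f (h * ⌈x / h⌉₊)) (𝓝[>] 0)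
      (𝓝 (∫ x in Ioi 0, f x)) :=
    tendsto_integral_filter_of_dominated_convergence G
      (.of_forall fun h => (measurable_comp_mul_natCeil_div f h).aestronglyMeasurable)
      hbound_ae hG (ae_restrict_of_forall_mem measurableSet_Ioi fun x hx =>
        (hf x hx).tendsto.comp (tendsto_mul_natCeil_div (le_of_lt hx)))
  refine hstep.congr' ?_
  filter_upwards [Ioc_mem_nhdsGT zero_lt_one, hbound_ae] with h hh hbh
  exact integral_Ioi_comp_mul_natCeil_div hh.1
    (hG.mono' (measurable_comp_mul_natCeil_div f h).aestronglyMeasurable hbh)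

end RiemannSum

lemma rpow_le_two_rpow_abs {u : ℝ} (s : ℝ) (h1 : 1 ≤ u) (h2 : u ≤ 2) : u ^ s ≤ 2 ^ |s| :=
  calc u ^ s ≤ u ^ |s| := rpow_le_rpow_of_exponent_le h1 (le_abs_self s)
    _ ≤ 2 ^ |s| := rpow_le_rpow (by linarith) h2 (abs_nonneg s)

lemma integrableOn_Ioi_zero_of_le_rpow {g : ℝ → ℝ} {s q C : ℝ} (hs : -1 < s) (hq : q < -1)
    (hg : AEStronglyMeasurable g (volume.restrict (Ioi 0)))
    (hsmall : ∀ x ∈ Ioc (0 : ℝ) 1, ‖g x‖ ≤ C * (x ^ s + 1))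
    (hlarge : ∀ x ∈ Ioi (1 : ℝ), ‖g x‖ ≤ C * x ^ q) :
    IntegrableOn g (Ioi 0) := by
  rw [← Ioc_union_Ioi_eq_Ioi zero_le_one]
  refine IntegrableOn.union ?_ ?_
  · have hrpow : IntegrableOn (fun x : ℝ => x ^ s) (Ioc 0 1) := by
      rwa [integrableOn_Ioc_iff_integrableOn_Ioo,
        intervalIntegral.integrableOn_Ioo_rpow_iff zero_lt_one]
    refine Integrable.mono' ((hrpow.add (integrableOn_const measure_Ioc_lt_top.ne)).const_mul C)
      (hg.mono_set Ioc_subset_Ioi_self) (ae_restrict_of_forall_mem measurableSet_Ioc hsmall)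
  · exact Integrable.mono' ((integrableOn_Ioi_rpow_of_lt hq zero_lt_one).const_mul C)
      (hg.mono_set (Ioi_subset_Ioi zero_le_one))
      (ae_restrict_of_forall_mem measurableSet_Ioi hlarge)

section PowerRatio

variable {s p : ℝ}

lemma integrableOn_rpow_add_rpow_div (hs : -1 < s) (hsp : s + 1 < p) :
    IntegrableOn (fun x : ℝ => (x ^ s + (x + 1) ^ s) / (1 + x ^ p)) (Ioi 0) := by
  refine integrableOn_Ioi_zero_of_le_rpow (C := 1 + 2 ^ |s|) hs (q := s - p) (by linarith)
    (by fun_prop : Measurable _).aestronglyMeasurable (fun x ⟨hx0, hx1⟩ => ?_) (fun x hx => ?_)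
  · have hshift : (x + 1) ^ s ≤ 2 ^ |s| := rpow_le_two_rpow_abs s (by linarith) (by linarith)
    rw [Real.norm_of_nonneg (by positivity)]
    calc (x ^ s + (x + 1) ^ s) / (1 + x ^ p) ≤ x ^ s + (x + 1) ^ s :=
          div_le_self (by positivity) (by simp; positivity)
      _ ≤ (1 + 2 ^ |s|) * (x ^ s + 1) := by
          nlinarith [rpow_nonneg hx0.le s, one_le_rpow one_le_two (abs_nonneg s)]
  · have hx0 : 0 < x := lt_trans zero_lt_one hx
    have hshift : (x + 1) ^ s ≤ 2 ^ |s| * x ^ s := by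
      have hratio : ((x + 1) / x) ^ s ≤ 2 ^ |s| := rpow_le_two_rpow_abs s
        ((one_le_div hx0).mpr (by linarith)) ((div_le_iff₀ hx0).mpr (by linarith [mem_Ioi.mp hx]))
      calc (x + 1) ^ s = ((x + 1) / x) ^ s * x ^ s := by
            rw [div_rpow (by linarith) hx0.le, div_mul_cancel₀ _ (rpow_pos_of_pos hx0 s).ne']
        _ ≤ 2 ^ |s| * x ^ s := by gcongr
    rw [Real.norm_of_nonneg (by positivity), rpow_sub hx0]
    calc (x ^ s + (x + 1) ^ s) / (1 + x ^ p) ≤ (x ^ s + (x + 1) ^ s) / x ^ p := by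
          gcongr; linarith
      _ ≤ (1 + 2 ^ |s|) * (x ^ s / x ^ p) := by
          rw [← mul_div_assoc]; gcongr; linarith

lemma rpow_div_one_add_rpow_le (hp : 0 < p) {x y : ℝ} (hx : 0 < x) (hxy : x ≤ y)
    (hyx : y ≤ x + 1) :
    y ^ s / (1 + y ^ p) ≤ (x ^ s + (x + 1) ^ s) / (1 + x ^ p) := by
  have hnum : y ^ s ≤ x ^ s + (x + 1) ^ s := by
    rcases le_total 0 s with hs | hs
    · linarith [rpow_le_rpow (hx.trans_le hxy).le hyx hs, rpow_nonneg hx.le s]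
    · linarith [rpow_le_rpow_of_nonpos hx hxy hs, rpow_nonneg (by linarith : 0 ≤ x + 1) s]
  have hden : x ^ p ≤ y ^ p := rpow_le_rpow hx.le hxy hp.le
  gcongr

lemma integrableOn_rpow_div_one_add_rpow (hs : -1 < s) (hsp : s + 1 < p) :
    IntegrableOn (fun x : ℝ => x ^ s / (1 + x ^ p)) (Ioi 0) :=
  (integrableOn_rpow_add_rpow_div hs hsp).mono' (by fun_prop : Measurable _).aestronglyMeasurable
    (ae_restrict_of_forall_mem measurableSet_Ioi fun x (hx : 0 < x) => by
      rw [Real.norm_of_nonneg (by positivity)]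
      exact rpow_div_one_add_rpow_le (by linarith) hx le_rfl (by linarith))

lemma integral_rpow_div_one_add_rpow_pos (hs : -1 < s) (hsp : s + 1 < p) :
    0 < ∫ x in Ioi (0 : ℝ), x ^ s / (1 + x ^ p) := by
  have hpos : ∀ x ∈ Ioi (0 : ℝ), 0 < x ^ s / (1 + x ^ p) := fun x (hx : 0 < x) => by positivity
  rw [setIntegral_pos_iff_support_of_nonneg_ae
    (ae_restrict_of_forall_mem measurableSet_Ioi fun x hx => (hpos x hx).le)
    (integrableOn_rpow_div_one_add_rpow hs hsp)]
  have : Ioi (0 : ℝ) ⊆ Function.support (fun x : ℝ => x ^ s / (1 + x ^ p)) ∩ Ioi 0 :=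
    fun x hx => ⟨(hpos x hx).ne', hx⟩
  exact (measure_mono this).trans_lt' (by simp)

lemma image_inv_one_add_rpow_Ioi (hp : 0 < p) :
    (fun x : ℝ => (1 + x ^ p)⁻¹) '' Ioi 0 = Ioo 0 1 := by
  refine Subset.antisymm ?_ fun t ⟨ht0, ht1⟩ => ?_
  · rintro _ ⟨x, hx, rfl⟩
    have hxp : 0 < x ^ p := rpow_pos_of_pos hx p
    exact ⟨by positivity, inv_lt_one_of_one_lt₀ (by linarith)⟩
  · have ht : 0 < t⁻¹ - 1 := by linarith [(one_lt_inv₀ ht0).mpr ht1]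
    refine ⟨(t⁻¹ - 1) ^ p⁻¹, rpow_pos_of_pos ht _, ?_⟩
    simp only [rpow_inv_rpow ht.le hp.ne', add_sub_cancel, inv_inv]

lemma strictAntiOn_inv_one_add_rpow (hp : 0 < p) :
    StrictAntiOn (fun x : ℝ => (1 + x ^ p)⁻¹) (Ioi 0) := fun x (hx : 0 < x) y _ hxy =>
  inv_strictAnti₀ (by positivity) (by linarith [rpow_lt_rpow hx.le hxy hp])

lemma hasDerivAt_inv_one_add_rpow {x : ℝ} (hx : 0 < x) :
    HasDerivAt (fun x : ℝ => (1 + x ^ p)⁻¹) (-(p * x ^ (p - 1)) / (1 + x ^ p) ^ 2) x :=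
  ((hasDerivAt_rpow_const (Or.inl hx.ne')).const_add 1).inv (by positivity)

lemma abs_deriv_mul_beta_integrand (hp : 0 < p) {x : ℝ} (hx : 0 < x) :
    |-(p * x ^ (p - 1)) / (1 + x ^ p) ^ 2| *
        ((1 + x ^ p)⁻¹ ^ (1 - (s + 1) / p - 1) * (1 - (1 + x ^ p)⁻¹) ^ ((s + 1) / p - 1)) =
      p * (x ^ s / (1 + x ^ p)) := by
  set u := 1 + x ^ p with hu
  have hxp : 0 < x ^ p := rpow_pos_of_pos hx p
  have hu0 : 0 < u := by positivity
  have h1 : (u⁻¹) ^ (1 - (s + 1) / p - 1) = u ^ ((s + 1) / p) := by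
    rw [inv_rpow hu0.le, ← rpow_neg hu0.le]; ring_nf
  have h2 : (1 - u⁻¹) ^ ((s + 1) / p - 1) = x ^ (s + 1 - p) * u ^ (1 - (s + 1) / p) := by
    rw [show 1 - u⁻¹ = x ^ p * u⁻¹ by field_simp; ring, mul_rpow hxp.le (inv_nonneg.mpr hu0.le),
      ← rpow_mul hx.le, inv_rpow hu0.le, ← rpow_neg hu0.le]
    congr 2 <;> field_simp
    ring
  rw [h1, h2, abs_div, abs_neg, abs_of_pos (by positivity), abs_of_pos (by positivity)]
  have hu_pow : u ^ ((s + 1) / p) * u ^ (1 - (s + 1) / p) = u := by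
    rw [← rpow_add hu0, add_sub_cancel, rpow_one]
  have hx_pow : x ^ (p - 1) * x ^ (s + 1 - p) = x ^ s := by
    rw [← rpow_add hx]; ring_nf
  calc p * x ^ (p - 1) / u ^ 2 * (u ^ ((s + 1) / p) * (x ^ (s + 1 - p) * u ^ (1 - (s + 1) / p)))
      = p * (x ^ (p - 1) * x ^ (s + 1 - p)) * (u ^ ((s + 1) / p) * u ^ (1 - (s + 1) / p)) /
          u ^ 2 := by ring
    _ = p * (x ^ s / u) := by
        rw [hu_pow, hx_pow]; field_simp

theorem integral_rpow_div_one_add_rpow (hp : 0 < p) :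
    ∫ x in Ioi (0 : ℝ), x ^ s / (1 + x ^ p) = eulerBeta (1 - (s + 1) / p) ((s + 1) / p) / p := by
  have hsubst := integral_image_eq_integral_abs_deriv_smul measurableSet_Ioi
    (fun x (hx : 0 < x) => (hasDerivAt_inv_one_add_rpow hx).hasDerivWithinAt)
    (strictAntiOn_inv_one_add_rpow hp).injOn
    (fun t => t ^ (1 - (s + 1) / p - 1) * (1 - t) ^ ((s + 1) / p - 1))
  simp only [smul_eq_mul] at hsubst
  rw [image_inv_one_add_rpow_Ioi hp, setIntegral_congr_fun measurableSet_Ioi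
    fun x (hx : 0 < x) => abs_deriv_mul_beta_integrand hp hx, integral_const_mul] at hsubst
  rw [eulerBeta, intervalIntegral.integral_of_le zero_le_one, integral_Ioc_eq_integral_Ioo, hsubst,
    mul_div_cancel_left₀ _ hp.ne']

lemma rpow_neg_inv_mul_rpow_div_one_add_rpow {n c : ℝ} (hn : 0 < n) (hp : 0 < p) (hc : 0 ≤ c) :
    n ^ (-p⁻¹) * ((c * n ^ (-p⁻¹)) ^ s / (1 + (c * n ^ (-p⁻¹)) ^ p)) =
      n ^ ((p - s - 1) / p) * (c ^ s / (n + c ^ p)) := by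
  have hnp : (n ^ (-p⁻¹)) ^ p = n⁻¹ := by
    rw [← rpow_mul hn.le, neg_mul, inv_mul_cancel₀ hp.ne', rpow_neg_one]
  have hexp : n ^ (-p⁻¹) * (n ^ (-p⁻¹)) ^ s * n = n ^ ((p - s - 1) / p) := by
    rw [← rpow_mul hn.le, ← rpow_add hn, ← rpow_add_one hn.ne']
    congr 1; field_simp; ring
  rw [mul_rpow hc (by positivity), mul_rpow hc (by positivity), hnp, ← hexp]
  field_simp

theorem tendsto_riemannSum_rpow_div_one_add_rpow (hs : -1 < s) (hsp : s + 1 < p) :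
    Tendsto (fun h : ℝ => ∑' i : ℕ, h * (((i + 1) * h) ^ s / (1 + ((i + 1) * h) ^ p))) (𝓝[>] 0)
      (𝓝 (∫ x in Ioi (0 : ℝ), x ^ s / (1 + x ^ p))) := by
  have hp : 0 < p := by linarith
  refine tendsto_riemannSum_Ioi_of_dominated (fun x (hx : 0 < x) => ?_)
    (integrableOn_rpow_add_rpow_div hs hsp) fun h ⟨hh0, hh1⟩ x (hx : 0 < x) => ?_
  · have : 1 + x ^ p ≠ 0 := by positivity
    fun_prop (disch := first | assumption | exact Or.inl hx.ne')
  · obtain ⟨hxy, hyx⟩ := mul_natCeil_div_mem_Icc hh0 hx.le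
    rw [Real.norm_of_nonneg (by have := hx.trans_le hxy; positivity)]
    exact rpow_div_one_add_rpow_le hp hx hxy (by linarith)

end PowerRatio

/-- Uniform-allocation risk asymptotics over the Sobolev hyperrectangle:
Σ_{i≥1} i^{2β}/(n + i^{2α+2β+1}) ∼ B̄_H n^{−2α/(2α+2β+1)} with
B̄_H = B(2α/(2α+2β+1), (2β+1)/(2α+2β+1))/(2α+2β+1). -/
theorem stmt10 (α β : ℝ) (hα : 0 < α) (hβ : -(1/2 : ℝ) < β) :
    Tendsto (fun n : ℝ =>
        (∑' i : ℕ, ((i : ℝ) + 1) ^ (2*β) / (n + ((i : ℝ) + 1) ^ (2*α + 2*β + 1))) /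
          ((eulerBeta (2*α/(2*α+2*β+1)) ((2*β+1)/(2*α+2*β+1)) / (2*α+2*β+1)) *
            n ^ (-(2*α)/(2*α+2*β+1))))
      atTop (nhds 1) := by
  set p := 2*α + 2*β + 1 with hp_def
  have hp : 0 < p := by linarith
  have hsp : 2*β + 1 < p := by linarith
  have hI : ∫ x in Ioi (0 : ℝ), x ^ (2*β) / (1 + x ^ p) =
      eulerBeta (2*α/p) ((2*β+1)/p) / p := by
    rw [integral_rpow_div_one_add_rpow hp, one_sub_div hp.ne', hp_def]
    ring_nf
  have hI_pos := integral_rpow_div_one_add_rpow_pos (by linarith) hsp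
  have hmesh : Tendsto (fun n : ℝ => n ^ (-p⁻¹)) atTop (𝓝[>] 0) :=
    tendsto_nhdsWithin_iff.mpr ⟨tendsto_rpow_neg_atTop (inv_pos.mpr hp),
      eventually_gt_atTop 0 |>.mono fun n hn => rpow_pos_of_pos hn _⟩
  have hlim := ((tendsto_riemannSum_rpow_div_one_add_rpow (by linarith) hsp).comp
    hmesh).div_const (∫ x in Ioi (0 : ℝ), x ^ (2*β) / (1 + x ^ p))
  rw [div_self hI_pos.ne'] at hlim
  refine hlim.congr' (eventually_gt_atTop 0 |>.mono fun n hn => ?_)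
  have hscale : (p - 2*β - 1) / p = 2*α/p := by rw [hp_def]; ring_nf
  have hterm : ∀ i : ℕ, n ^ (-p⁻¹) * ((((i : ℝ) + 1) * n ^ (-p⁻¹)) ^ (2*β) /
      (1 + (((i : ℝ) + 1) * n ^ (-p⁻¹)) ^ p)) =
      n ^ (2*α/p) * (((i : ℝ) + 1) ^ (2*β) / (n + ((i : ℝ) + 1) ^ p)) := fun i => by
    rw [rpow_neg_inv_mul_rpow_div_one_add_rpow hn hp (by positivity), hscale]
  dsimp only [Function.comp_apply]
  rw [tsum_congr hterm, tsum_mul_left, ← hI, neg_div, rpow_neg hn.le]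
  field_simp
end

section
/- Let a = (aᵢ) be a positive nonincreasing sequence tending to 0, σᵢ > 0, nᵢ > 0, and suppose t > 0 satisfies Σᵢ σᵢ²(1 − t/aᵢ)₊/(nᵢ aᵢ) = t. Define λᵢ = (1 − t/aᵢ)₊ and θᵢ² = σᵢ² aᵢ (1 − t/aᵢ)₊/(nᵢ t). Then θ = (θᵢ) lies on the boundary of the ellipsoid E(a), i.e., Σᵢ (θᵢ/aᵢ)² = 1, and the risk Σᵢ [σᵢ²λᵢ²/nᵢ + (1−λᵢ)²θᵢ²] equals Σᵢ (σᵢ²/nᵢ)(1 − t/aᵢ)₊. -/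
/-! Each `(θᵢ/aᵢ)²` is the `i`-th term of the equation defining `t`, divided by `t`, so the
ellipsoid sum is `t / t = 1`. With `λ = (1 - t/a)₊` one has `λ (1 - λ) = λ t / a` (either `λ = 0`
or `1 - λ = t / a`), which collapses each risk term to `σ² λ / n`. -/

lemma shrink_mul_one_sub_shrink (a t : ℝ) :
    max (1 - t / a) 0 * (1 - max (1 - t / a) 0) = max (1 - t / a) 0 * (t / a) := by
  rcases le_total (1 - t / a) 0 with h | h
  · simp [max_eq_right h]
  · rw [max_eq_left h]
    ring

lemma sq_div_of_sq_eq {θ s a n t : ℝ} (ha : a ≠ 0) (hn : n ≠ 0)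
    (hθ : θ ^ 2 = s * a * max (1 - t / a) 0 / (n * t)) :
    (θ / a) ^ 2 = s * max (1 - t / a) 0 / (n * a) / t := by
  rw [div_pow, hθ]
  field_simp

lemma risk_term_eq {θ s a n t : ℝ} (ha : a ≠ 0) (hn : n ≠ 0) (ht : t ≠ 0)
    (hθ : θ ^ 2 = s * a * max (1 - t / a) 0 / (n * t)) :
    s * max (1 - t / a) 0 ^ 2 / n + (1 - max (1 - t / a) 0) ^ 2 * θ ^ 2
      = s / n * max (1 - t / a) 0 := by
  have key := shrink_mul_one_sub_shrink a t
  set l := max (1 - t / a) 0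
  calc s * l ^ 2 / n + (1 - l) ^ 2 * θ ^ 2
      = s * l ^ 2 / n + (1 - l) * (l * (1 - l)) * s * a / (n * t) := by rw [hθ]; ring
    _ = s * l ^ 2 / n + (1 - l) * (l * (t / a)) * s * a / (n * t) := by rw [key]
    _ = s / n * l := by field_simp; ring

theorem stmt15_general (a σ nn : ℕ → ℝ) (t : ℝ)
    (ha : ∀ i, 0 < a i)
    (hnn : ∀ i, 0 < nn i) (ht : 0 < t)
    (heq : ∑' i, (σ i) ^ 2 * max (1 - t / a i) 0 / (nn i * a i) = t)
    (lam θ : ℕ → ℝ)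
    (hlam : ∀ i, lam i = max (1 - t / a i) 0)
    (hθ : ∀ i, θ i = Real.sqrt ((σ i) ^ 2 * a i * max (1 - t / a i) 0 / (nn i * t))) :
    (∑' i, (θ i / a i) ^ 2 = 1) ∧
    (∑' i, ((σ i) ^ 2 * (lam i) ^ 2 / nn i + (1 - lam i) ^ 2 * (θ i) ^ 2)
      = ∑' i, (σ i) ^ 2 / nn i * max (1 - t / a i) 0) := by
  have hθsq (i : ℕ) : θ i ^ 2 = σ i ^ 2 * a i * max (1 - t / a i) 0 / (nn i * t) := by
    rw [hθ, Real.sq_sqrt (by have := ha i; have := hnn i; positivity)]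
  constructor
  · calc ∑' i, (θ i / a i) ^ 2
        = ∑' i, σ i ^ 2 * max (1 - t / a i) 0 / (nn i * a i) / t :=
          tsum_congr fun i => sq_div_of_sq_eq (ha i).ne' (hnn i).ne' (hθsq i)
      _ = 1 := by rw [tsum_div_const, heq, div_self ht.ne']
  · refine tsum_congr fun i => ?_
    rw [hlam]
    exact risk_term_eq (ha i).ne' (hnn i).ne' ht.ne' (hθsq i)

/-- Saddle point structure of Pinsker's theorem: if t > 0 solves
Σᵢ σᵢ²(1 − t/aᵢ)₊/(nᵢaᵢ) = t, then with λᵢ = (1 − t/aᵢ)₊ and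
θᵢ = √(σᵢ² aᵢ (1 − t/aᵢ)₊/(nᵢ t)), the point θ lies on the boundary of the
ellipsoid E(a), i.e. Σᵢ(θᵢ/aᵢ)² = 1, and the risk
Σᵢ[σᵢ²λᵢ²/nᵢ + (1−λᵢ)²θᵢ²] equals Σᵢ(σᵢ²/nᵢ)(1 − t/aᵢ)₊. -/
theorem stmt15 (a σ nn : ℕ → ℝ) (t : ℝ)
    (ha : ∀ i, 0 < a i) (hmono : Antitone a)
    (hlim : Filter.Tendsto a Filter.atTop (nhds 0))
    (hσ : ∀ i, 0 < σ i) (hnn : ∀ i, 0 < nn i) (ht : 0 < t)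
    (hsum1 : Summable (fun i => (σ i) ^ 2 * max (1 - t / a i) 0 / (nn i * a i)))
    (heq : ∑' i, (σ i) ^ 2 * max (1 - t / a i) 0 / (nn i * a i) = t)
    (lam θ : ℕ → ℝ)
    (hlam : ∀ i, lam i = max (1 - t / a i) 0)
    (hθ : ∀ i, θ i = Real.sqrt ((σ i) ^ 2 * a i * max (1 - t / a i) 0 / (nn i * t)))
    (hsum2 : Summable (fun i =>
      (σ i) ^ 2 * (lam i) ^ 2 / nn i + (1 - lam i) ^ 2 * (θ i) ^ 2)) :
    (∑' i, (θ i / a i) ^ 2 = 1) ∧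
    (∑' i, ((σ i) ^ 2 * (lam i) ^ 2 / nn i + (1 - lam i) ^ 2 * (θ i) ^ 2)
      = ∑' i, (σ i) ^ 2 / nn i * max (1 - t / a i) 0) :=
  stmt15_general a σ nn t ha hnn ht heq lam θ hlam hθ
end

section
/- Let α > 0 and β > −1/2. Then as n → ∞, n^{−1}(Σ_{i=1}^{∞} i^β [1 − t_s(n) i^α]₊^{1/2})² ∼ B_E · n^{−α/(α+β+1)}, where t_s(n) is as in the sub-optimal ellipsoid allocation (t_s(n) ∼ d_s^{−α} with d_s = (α²(3α+2β+2) n/(2(β+1)B²((β+1)/α, 3/2)))^{1/(2(α+β+1))}) and B_E = (B²((β+1)/α, 3/2)/α²)^{α/(α+β+1)} · ((3α+2β+2)/(2(β+1)))^{(β+1)/(α+β+1)}. -/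
open Filter

/-!
With `h = t^{1/α}` the series is `h^{-(β+1)}` times the right-endpoint Riemann sum
`h ∑ g(h(i+1))` of the profile `g(u) = u^β (1 - u^α)₊^{1/2}`. As `t → 0` this Riemann sum tends
to `∫₀^∞ g = B((β+1)/α, 3/2)/α` (dominated convergence for the step functions, and the
substitution `s = u^α`). Inserting `t_s(n) ∼ d_s(n)^{-α}` and the definition of `d_s(n)`, the
powers of `n` cancel against `n^{-α/(α+β+1)}` and the constants against `B_E`.
-/

open Topology MeasureTheory Set

theorem le_mul_natCeil_div {h x : ℝ} (hh : 0 < h) : x ≤ h * ⌈x / h⌉₊ := by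
  rw [← div_le_iff₀' hh]
  exact Nat.le_ceil _

theorem mul_natCeil_div_lt {h x : ℝ} (hh : 0 < h) (hx : 0 ≤ x) : h * ⌈x / h⌉₊ < x + h := by
  have := Nat.ceil_lt_add_one (div_nonneg hx hh.le)
  calc h * ⌈x / h⌉₊ < h * (x / h + 1) := by gcongr
    _ = x + h := by field_simp

theorem mul_tsum_eq_integral_natCeil {F : ℕ → ℝ} {h : ℝ} (hh : 0 < h)
    (hF : IntegrableOn (fun x => F ⌈x / h⌉₊) (Ioi 0)) :
    h * ∑' i : ℕ, F (i + 1) = ∫ x in Ioi 0, F ⌈x / h⌉₊ := by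
  have hmono : Monotone fun i : ℕ => h * i :=
    fun i j hij => mul_le_mul_of_nonneg_left (Nat.cast_le.2 hij) hh.le
  have hdisj := hmono.pairwise_disjoint_on_Ioc_succ
  simp only [Order.succ_eq_add_one] at hdisj
  have hunbdd : ¬BddAbove (range fun i : ℕ => h * i) :=
    not_bddAbove_iff.2 fun y => ⟨_, ⟨⌈y / h⌉₊ + 1, rfl⟩, by
      push_cast
      linarith [le_mul_natCeil_div (x := y) hh]⟩
  have hU : ⋃ i : ℕ, Ioc (h * i) (h * (i + 1 : ℕ)) = Ioi 0 := by
    simpa using iUnion_Ioc_map_succ_eq_Ioi (fun a => by simpa using by positivity) hunbdd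
  rw [← hU] at hF ⊢
  rw [integral_iUnion (fun _ => measurableSet_Ioc) hdisj hF, ← tsum_mul_left]
  congr with i
  have hconst : EqOn (fun x => F ⌈x / h⌉₊) (fun _ => F (i + 1))
      (Ioc (h * i) (h * (i + 1 : ℕ))) := fun x hx => congrArg F <| by
    rw [Nat.ceil_eq_iff i.succ_ne_zero, Nat.succ_sub_one, lt_div_iff₀' hh, div_le_iff₀' hh]
    exact hx
  rw [setIntegral_congr_fun measurableSet_Ioc hconst, setIntegral_const,
    Real.volume_real_Ioc_of_le (hmono i.le_succ), smul_eq_mul]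
  push_cast
  ring

theorem tendsto_mul_natCeil_div_nhdsGT_zero (x : ℝ) (hx : 0 ≤ x) :
    Tendsto (fun h : ℝ => h * ⌈x / h⌉₊) (𝓝[>] 0) (𝓝 x) := by
  have hupper : Tendsto (fun h : ℝ => x + h) (𝓝[>] 0) (𝓝 x) := by
    simpa using (tendsto_nhdsWithin_of_tendsto_nhds (continuous_const_add x).continuousAt.tendsto :
      Tendsto (fun h : ℝ => x + h) (𝓝[>] 0) (𝓝 (x + 0)))
  refine tendsto_of_tendsto_of_tendsto_of_le_of_le' tendsto_const_nhds hupper ?_ ?_ <;>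
    filter_upwards [self_mem_nhdsWithin] with h hh
  · exact le_mul_natCeil_div hh
  · exact (mul_natCeil_div_lt hh hx).le

theorem tendsto_mul_tsum_nhdsGT_zero {g : ℝ → ℝ} {β : ℝ} (hβ : -1 < β)
    (hcont : ∀ x, 0 < x → ContinuousAt g x) (hbound : ∀ u, 0 < u → |g u| ≤ u ^ β)
    (hzero : ∀ u, 1 < u → g u = 0) :
    Tendsto (fun h => h * ∑' i : ℕ, g (h * (i + 1))) (𝓝[>] 0) (𝓝 (∫ u in Ioi 0, g u)) := by
  set D : ℝ → ℝ := (Ioc 0 1).indicator fun x => x ^ β + (x + 1) ^ β with hD_def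
  have hD : IntegrableOn D (Ioi 0) := by
    refine (IntegrableOn.integrable_indicator ?_ measurableSet_Ioc).integrableOn
    refine (intervalIntegral.intervalIntegrable_rpow' hβ).1.add ?_
    refine (ContinuousOn.integrableOn_Icc ?_).mono_set Ioc_subset_Icc_self
    exact ContinuousOn.rpow_const (by fun_prop) fun x hx => Or.inl (by linarith [hx.1])
  -- the step functions factor through `ℕ`, hence are measurable
  have hmeas (h : ℝ) :
      AEStronglyMeasurable (fun x => g (h * ⌈x / h⌉₊)) (volume.restrict (Ioi 0)) :=
    ((measurable_from_nat (f := fun n : ℕ => g (h * n))).comp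
      (Nat.measurable_ceil.comp (measurable_id.div_const h))).aestronglyMeasurable
  -- the step point `y = h ⌈x/h⌉₊` lies in `[x, x + h)`, so `|g y| ≤ y ^ β ≤ x ^ β + (x + 1) ^ β`
  have hdom : ∀ h ∈ Ioc (0 : ℝ) 1, ∀ x, 0 < x → ‖g (h * ⌈x / h⌉₊)‖ ≤ D x := by
    intro h hh x hx
    have hxy := le_mul_natCeil_div (x := x) hh.1
    have hyx := mul_natCeil_div_lt hh.1 hx.le
    by_cases hx1 : x ≤ 1
    · rw [Real.norm_eq_abs, hD_def, indicator_of_mem (mem_Ioc.2 ⟨hx, hx1⟩)]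
      refine (hbound _ (hx.trans_le hxy)).trans ?_
      rcases le_total β 0 with hβ0 | hβ0
      · linarith [Real.rpow_le_rpow_of_nonpos hx hxy hβ0,
          Real.rpow_nonneg (by linarith : 0 ≤ x + 1) β]
      · linarith [Real.rpow_le_rpow (hx.trans_le hxy).le
          (by linarith [hh.2] : h * ⌈x / h⌉₊ ≤ x + 1) hβ0, Real.rpow_nonneg hx.le β]
    · rw [hzero _ ((not_le.1 hx1).trans_le hxy), hD_def,
        indicator_of_notMem (fun hm => hx1 (mem_Ioc.1 hm).2), norm_zero]
  have hlim : Tendsto (fun h => ∫ x in Ioi 0, g (h * ⌈x / h⌉₊)) (𝓝[>] 0)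
      (𝓝 (∫ u in Ioi 0, g u)) := by
    refine tendsto_integral_filter_of_dominated_convergence D (Eventually.of_forall hmeas) ?_ hD ?_
    · filter_upwards [Ioc_mem_nhdsGT zero_lt_one] with h hh
      exact (ae_restrict_iff' measurableSet_Ioi).2 (ae_of_all _ (hdom h hh))
    · refine (ae_restrict_iff' measurableSet_Ioi).2 (ae_of_all _ fun x hx => ?_)
      exact (hcont x hx).tendsto.comp (tendsto_mul_natCeil_div_nhdsGT_zero x hx.le)
  refine hlim.congr' ?_
  filter_upwards [Ioc_mem_nhdsGT zero_lt_one] with h hh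
  have hint : IntegrableOn (fun x => g (h * ⌈x / h⌉₊)) (Ioi 0) :=
    hD.mono' (hmeas h) ((ae_restrict_iff' measurableSet_Ioi).2 (ae_of_all _ (hdom h hh)))
  rw [← mul_tsum_eq_integral_natCeil (F := fun n => g (h * n)) hh.1 hint]
  push_cast
  rfl

theorem eulerBeta_pos {x y : ℝ} (hx : 0 < x) (hy : 1 ≤ y) : 0 < eulerBeta x y := by
  refine intervalIntegral.intervalIntegral_pos_of_pos_on ?_ (fun t ht => ?_) zero_lt_one
  · refine (intervalIntegral.intervalIntegrable_rpow' (by linarith)).mul_continuousOn ?_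
    exact ContinuousOn.rpow_const (by fun_prop) fun _ _ => Or.inr (by linarith)
  · have := ht.2
    exact mul_pos (Real.rpow_pos_of_pos ht.1 _) (Real.rpow_pos_of_pos (by linarith) _)

noncomputable def ellipsoidProfile (α β u : ℝ) : ℝ := u ^ β * √(max (1 - u ^ α) 0)

theorem abs_ellipsoidProfile_le {α β u : ℝ} (hu : 0 ≤ u) : |ellipsoidProfile α β u| ≤ u ^ β := by
  have hsqrt : √(max (1 - u ^ α) 0) ≤ 1 :=
    Real.sqrt_le_one.2 (max_le (by linarith [Real.rpow_nonneg hu α]) zero_le_one)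
  rw [ellipsoidProfile, abs_of_nonneg (by positivity)]
  exact mul_le_of_le_one_right (Real.rpow_nonneg hu β) hsqrt

theorem ellipsoidProfile_eq_zero {α β u : ℝ} (hα : 0 < α) (hu : 1 < u) :
    ellipsoidProfile α β u = 0 := by
  have : 1 < u ^ α := Real.one_lt_rpow hu hα
  simp [ellipsoidProfile, max_eq_right (by linarith : 1 - u ^ α ≤ 0)]

theorem continuousAt_ellipsoidProfile (α β : ℝ) {x : ℝ} (hx : 0 < x) :
    ContinuousAt (ellipsoidProfile α β) x := by
  unfold ellipsoidProfile
  have := Real.continuousAt_rpow_const x α (Or.inl hx.ne')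
  have := Real.continuousAt_rpow_const x β (Or.inl hx.ne')
  fun_prop

theorem integral_Ioi_ellipsoidProfile_one (γ : ℝ) :
    ∫ s in Ioi 0, ellipsoidProfile 1 (γ - 1) s = eulerBeta γ (3 / 2) := by
  rw [eulerBeta, intervalIntegral.integral_of_le zero_le_one,
    setIntegral_eq_of_subset_of_forall_sdiff_eq_zero measurableSet_Ioi Ioc_subset_Ioi_self
      fun s hs => ellipsoidProfile_eq_zero one_pos (not_le.1 fun h => hs.2 ⟨hs.1, h⟩)]
  refine setIntegral_congr_fun measurableSet_Ioc fun s hs => ?_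
  rw [ellipsoidProfile, Real.rpow_one, max_eq_left (by linarith [hs.2]), Real.sqrt_eq_rpow]
  norm_num

theorem integral_Ioi_ellipsoidProfile {α : ℝ} (hα : 0 < α) (β : ℝ) :
    ∫ u in Ioi 0, ellipsoidProfile α β u = eulerBeta ((β + 1) / α) (3 / 2) / α := by
  have hsub := integral_comp_rpow_Ioi (ellipsoidProfile 1 ((β + 1) / α - 1)) hα.ne'
  rw [integral_Ioi_ellipsoidProfile_one] at hsub
  rw [← hsub, eq_div_iff hα.ne', ← integral_mul_const]
  refine setIntegral_congr_fun measurableSet_Ioi fun x (hx : 0 < x) => ?_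
  have hexp : x ^ (α - 1) * (x ^ α) ^ ((β + 1) / α - 1) = x ^ β := by
    rw [← Real.rpow_mul hx.le, ← Real.rpow_add hx]
    congr 1
    field_simp
    ring
  simp only [ellipsoidProfile, smul_eq_mul, abs_of_pos hα, Real.rpow_one]
  rw [← hexp]
  ring

theorem tsum_eq_rpow_mul_tsum_ellipsoidProfile (α β : ℝ) {h : ℝ} (hh : 0 < h) :
    ∑' i : ℕ, ((i : ℝ) + 1) ^ β * √(max (1 - h ^ α * ((i : ℝ) + 1) ^ α) 0) =
      h ^ (-(β + 1)) * (h * ∑' i : ℕ, ellipsoidProfile α β (h * (i + 1))) := by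
  have hscale : h ^ (-(β + 1)) * h * h ^ β = 1 := by
    rw [← Real.rpow_add_one hh.ne', ← Real.rpow_add hh]
    norm_num
  rw [← mul_assoc, ← tsum_mul_left]
  congr with i
  have hi : (0 : ℝ) ≤ i + 1 := by positivity
  rw [ellipsoidProfile, Real.mul_rpow hh.le hi, Real.mul_rpow hh.le hi]
  linear_combination (((i : ℝ) + 1) ^ β * √(max (1 - h ^ α * ((i : ℝ) + 1) ^ α) 0)) * hscale.symm

theorem tendsto_rpow_nhdsGT_zero {p : ℝ} (hp : 0 < p) :
    Tendsto (fun t : ℝ => t ^ p) (𝓝[>] 0) (𝓝[>] 0) := by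
  refine tendsto_nhdsWithin_iff.2 ⟨?_, ?_⟩
  · simpa [Real.zero_rpow hp.ne'] using
      ((Real.continuousAt_rpow_const 0 p (Or.inr hp.le)).tendsto.mono_left nhdsWithin_le_nhds)
  · filter_upwards [self_mem_nhdsWithin] with t ht using Real.rpow_pos_of_pos ht p

/-- The scale `d_s(n)` of the sub-optimal allocation, with `B` standing for
`B((β+1)/α, 3/2)`. -/
noncomputable def allocScale (α β B n : ℝ) : ℝ :=
  (α ^ 2 * (3 * α + 2 * β + 2) * n / (2 * (β + 1) * B ^ 2)) ^ (1 / (2 * (α + β + 1)))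

/-- The constant `B_E`, with `B` standing for `B((β+1)/α, 3/2)`. -/
noncomputable def riskConstant (α β B : ℝ) : ℝ :=
  (B ^ 2 / α ^ 2) ^ (α / (α + β + 1)) *
    ((3 * α + 2 * β + 2) / (2 * (β + 1))) ^ ((β + 1) / (α + β + 1))

theorem tendsto_allocScale_rpow_neg {α β B : ℝ} (hα : 0 < α) (hβ : 0 < β + 1) (hB : B ≠ 0) :
    Tendsto (fun n => allocScale α β B n ^ (-α)) atTop (𝓝 0) := by
  have hk : 0 < 3 * α + 2 * β + 2 := by linarith
  have hp : 0 < α + β + 1 := by linarith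
  have hlin : Tendsto (fun n : ℝ => α ^ 2 * (3 * α + 2 * β + 2) * n / (2 * (β + 1) * B ^ 2))
      atTop atTop :=
    (tendsto_id.const_mul_atTop (by positivity)).atTop_div_const (by positivity)
  exact (tendsto_rpow_neg_atTop hα).comp ((tendsto_rpow_atTop (by positivity)).comp hlin)

theorem risk_ratio_eq {α β B n t : ℝ} (hα : 0 < α) (hβ : 0 < β + 1) (hB : 0 < B) (hn : 0 < n)
    (ht : 0 < t) (R : ℝ) :
    n⁻¹ * ((t ^ α⁻¹) ^ (-(β + 1)) * R) ^ 2 / (riskConstant α β B * n ^ (-(α / (α + β + 1)))) =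
      (t / allocScale α β B n ^ (-α)) ^ (-(2 * (β + 1) / α)) * (α / B * R) ^ 2 := by
  have hp : 0 < α + β + 1 := by linarith
  have hk : 0 < 3 * α + 2 * β + 2 := by linarith
  have hk' : 0 < 2 * (β + 1) := by linarith
  have hsq : ((t ^ α⁻¹) ^ (-(β + 1))) ^ 2 = (t ^ α⁻¹) ^ (-(2 * (β + 1))) := by
    rw [← Real.rpow_natCast, ← Real.rpow_mul (by positivity)]
    ring_nf
  -- every factor is a positive power, so the identity is linear after taking logarithms
  have hlog : n⁻¹ * (t ^ α⁻¹) ^ (-(2 * (β + 1))) /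
        (riskConstant α β B * n ^ (-(α / (α + β + 1)))) =
      (t / allocScale α β B n ^ (-α)) ^ (-(2 * (β + 1) / α)) * (α / B) ^ 2 := by
    unfold riskConstant allocScale
    refine Real.log_injOn_pos (mem_Ioi.2 (by positivity)) (mem_Ioi.2 (by positivity)) ?_
    simp (disch := positivity) only [Real.log_mul, Real.log_div, Real.log_rpow, Real.log_pow,
      Real.log_inv]
    field_simp
    ring
  rw [mul_pow, hsq, mul_pow (α / B), ← mul_assoc _ ((α / B) ^ 2), ← hlog]
  ring

/-- Sharp asymptotics of the sub-optimal allocation risk over the Sobolev ellipsoid: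
with t_s(n) ∼ d_s(n)^{−α}, d_s(n) = (α²(3α+2β+2)n/(2(β+1)B²((β+1)/α,3/2)))^{1/(2(α+β+1))},
one has n^{−1}(Σ_i i^β[1 − t_s(n) i^α]₊^{1/2})² ∼ B_E n^{−α/(α+β+1)} with
B_E = (B²((β+1)/α,3/2)/α²)^{α/(α+β+1)} ((3α+2β+2)/(2(β+1)))^{(β+1)/(α+β+1)}. -/
theorem stmt17 (α β : ℝ) (hα : 0 < α) (hβ : -(1/2 : ℝ) < β)
    (ts : ℝ → ℝ) (hpos : ∀ n : ℝ, 0 < n → 0 < ts n)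
    (hts : Tendsto (fun n : ℝ => ts n /
        ((α^2 * (3*α + 2*β + 2) * n /
            (2*(β+1) * (eulerBeta ((β+1)/α) (3/2))^2)) ^ (1/(2*(α+β+1)))) ^ (-α))
      atTop (nhds 1)) :
    Tendsto (fun n : ℝ =>
        (n⁻¹ * (∑' i : ℕ, ((i : ℝ) + 1) ^ β *
            Real.sqrt (max (1 - ts n * ((i : ℝ) + 1) ^ α) 0)) ^ 2) /
          (((eulerBeta ((β+1)/α) (3/2))^2 / α^2) ^ (α/(α+β+1)) *
            ((3*α+2*β+2)/(2*(β+1))) ^ ((β+1)/(α+β+1)) * n ^ (-(α/(α+β+1)))))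
      atTop (nhds 1) := by
  have hβ1 : 0 < β + 1 := by linarith
  set B := eulerBeta ((β + 1) / α) (3 / 2)
  have hB : 0 < B := eulerBeta_pos (div_pos hβ1 hα) (by norm_num)
  have hts_zero : Tendsto ts atTop (𝓝[>] 0) := tendsto_nhdsWithin_iff.2
    ⟨(Asymptotics.isEquivalent_of_tendsto_one hts).symm.tendsto_nhds
      (tendsto_allocScale_rpow_neg hα hβ1 hB.ne'),
    eventually_atTop.2 ⟨1, fun n hn => hpos n (by linarith)⟩⟩
  have hriemann : Tendsto (fun n => ts n ^ α⁻¹ *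
      ∑' i : ℕ, ellipsoidProfile α β (ts n ^ α⁻¹ * (i + 1))) atTop (𝓝 (B / α)) := by
    rw [← integral_Ioi_ellipsoidProfile hα β]
    exact (tendsto_mul_tsum_nhdsGT_zero (by linarith)
      (fun x hx => continuousAt_ellipsoidProfile α β hx) (fun u hu => abs_ellipsoidProfile_le hu.le)
      (fun u hu => ellipsoidProfile_eq_zero hα hu)).comp
        ((tendsto_rpow_nhdsGT_zero (inv_pos.2 hα)).comp hts_zero)
  have hlim := (hts.rpow_const (p := -(2 * (β + 1) / α)) (Or.inl one_ne_zero)).mul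
    ((hriemann.const_mul (α / B)).pow 2)
  rw [Real.one_rpow, show α / B * (B / α) = 1 by field_simp, one_pow, one_mul] at hlim
  refine hlim.congr' (eventually_atTop.2 ⟨1, fun n hn => ?_⟩)
  have htn := hpos n (by linarith)
  have hsum := tsum_eq_rpow_mul_tsum_ellipsoidProfile α β (Real.rpow_pos_of_pos htn α⁻¹)
  rw [Real.rpow_inv_rpow htn.le hα.ne'] at hsum
  simp only [hsum]
  exact (risk_ratio_eq hα hβ1 hB (by linarith) htn _).symm
end

section
/- Let α > 0 and β > −1/2 with 2β+1 > 0, aᵢ = i^{−α}, σᵢ² = i^{2β}. Let t(n) solve Σᵢ i^{2β+α}(1 − t i^α)₊ = n t (the Pinsker equation for the uniform allocation n̄_u(n)). Then the uniform-allocation risk R(n) = n^{−1} Σᵢ i^{2β}(1 − t(n) i^α)₊ satisfies R(n) ∼ B̄_E n^{−2α/(2α+2β+1)} as n → ∞, where B̄_E = ((2α+2β+1)^{(2β+1)/(2α+2β+1)}/(2β+1)) · (α/(α+2β+1))^{2α/(2α+2β+1)}. -/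
/-!
Let `N(T) = ⌊T^{-1/α}⌋₊` be the number of nonzero terms. Then
`Σᵢ i^γ (1 - T i^α)₊ = S_γ(N) - T S_{γ+α}(N)` with `S_p(N) = Σ_{i ≤ N} i^p ∼ N^{p+1}/(p+1)`
(Bernoulli's inequality at each `i`, with steps `±1`, telescopes), and `T^{1/α} N(T) → 1`, so
`T^{(γ+1)/α} Σᵢ i^γ (1 - T i^α)₊ → α/((γ+1)(γ+α+1))` as `T → 0⁺`.
The Pinsker equation forces `t(n) → 0⁺`; eliminating `n` through it writes `R(n) n^{2α/(2α+2β+1)}`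
as a product of powers of the two scaled sums with `γ = 2β` and `γ = 2β+α` at `T = t(n)`, and
their limits combine to `B̄_E`.
-/

open Filter Finset Real Topology

lemma tendsto_of_mem_uIcc {ι α : Type*} [LinearOrder α] [TopologicalSpace α] [OrderTopology α]
    {l : Filter ι} {f g h : ι → α} {a : α} (hg : Tendsto g l (𝓝 a)) (hh : Tendsto h l (𝓝 a))
    (hf : ∀ᶠ i in l, f i ∈ Set.uIcc (g i) (h i)) : Tendsto f l (𝓝 a) := by
  refine tendsto_of_tendsto_of_tendsto_of_le_of_le' (by simpa using hg.min hh)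
    (by simpa using hg.max hh) (hf.mono fun _ hi => hi.1) (hf.mono fun _ hi => hi.2)

lemma rpow_add_one_add_mul_le_rpow_add {p x s : ℝ} (hp : 0 ≤ p) (hx : 0 < x) (hs : -x ≤ s) :
    x ^ (p + 1) + (p + 1) * x ^ p * s ≤ (x + s) ^ (p + 1) := by
  have hsx : -1 ≤ s / x := by rwa [le_div_iff₀ hx, neg_one_mul]
  calc x ^ (p + 1) + (p + 1) * x ^ p * s = x ^ (p + 1) * (1 + (p + 1) * (s / x)) := by
        rw [rpow_add_one hx.ne']; field_simp
    _ ≤ x ^ (p + 1) * (1 + s / x) ^ (p + 1) := by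
        gcongr; exact one_add_mul_self_le_rpow_one_add hsx (by linarith)
    _ = (x + s) ^ (p + 1) := by
        rw [← mul_rpow hx.le (by linarith), mul_one_add, mul_div_cancel₀ _ hx.ne']

lemma rpow_add_le_rpow_add_one_add_mul {p x s : ℝ} (hp₁ : -1 ≤ p) (hp₀ : p ≤ 0) (hx : 0 < x)
    (hs : -x ≤ s) : (x + s) ^ (p + 1) ≤ x ^ (p + 1) + (p + 1) * x ^ p * s := by
  have hsx : -1 ≤ s / x := by rwa [le_div_iff₀ hx, neg_one_mul]
  calc (x + s) ^ (p + 1) = x ^ (p + 1) * (1 + s / x) ^ (p + 1) := by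
        rw [← mul_rpow hx.le (by linarith), mul_one_add, mul_div_cancel₀ _ hx.ne']
    _ ≤ x ^ (p + 1) * (1 + (p + 1) * (s / x)) := by
        gcongr; exact rpow_one_add_le_one_add_mul_self hsx (by linarith) (by linarith)
    _ = x ^ (p + 1) + (p + 1) * x ^ p * s := by
        rw [rpow_add_one hx.ne']; field_simp

lemma mul_sum_range_rpow_mem_uIcc {p : ℝ} (hp : -1 < p) (M : ℕ) :
    (p + 1) * ∑ i ∈ range M, ((i : ℝ) + 1) ^ p ∈
      Set.uIcc ((M : ℝ) ^ (p + 1)) (((M : ℝ) + 1) ^ (p + 1) - 1) := by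
  have lower :
      ∑ i ∈ range M, (((i : ℝ) + 1) ^ (p + 1) - (i : ℝ) ^ (p + 1)) = (M : ℝ) ^ (p + 1) := by
    simpa [zero_rpow (by linarith : p + 1 ≠ 0)] using
      Finset.sum_range_sub (fun i : ℕ => (i : ℝ) ^ (p + 1)) M
  have upper : ∑ i ∈ range M, (((i : ℝ) + 1 + 1) ^ (p + 1) - ((i : ℝ) + 1) ^ (p + 1)) =
      ((M : ℝ) + 1) ^ (p + 1) - 1 := by
    simpa using Finset.sum_range_sub (fun i : ℕ => ((i : ℝ) + 1) ^ (p + 1)) M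
  rw [mul_sum, ← lower, ← upper, Set.mem_uIcc]
  rcases le_total 0 p with hp₀ | hp₀
  · refine Or.inl ⟨sum_le_sum fun i _ => ?_, sum_le_sum fun i _ => ?_⟩
    · have := rpow_add_one_add_mul_le_rpow_add hp₀ (x := (i : ℝ) + 1) (s := -1)
        (by positivity) (by linarith)
      simp only [add_neg_cancel_right, mul_neg, mul_one] at this
      linarith
    · have := rpow_add_one_add_mul_le_rpow_add hp₀ (x := (i : ℝ) + 1) (s := 1)
        (by positivity) (by linarith)
      linarith
  · refine Or.inr ⟨sum_le_sum fun i _ => ?_, sum_le_sum fun i _ => ?_⟩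
    · have := rpow_add_le_rpow_add_one_add_mul hp.le hp₀ (x := (i : ℝ) + 1) (s := 1)
        (by positivity) (by linarith)
      linarith
    · have := rpow_add_le_rpow_add_one_add_mul hp.le hp₀ (x := (i : ℝ) + 1) (s := -1)
        (by positivity) (by linarith)
      simp only [add_neg_cancel_right, mul_neg, mul_one] at this
      linarith

lemma tendsto_sum_range_rpow_div {p : ℝ} (hp : -1 < p) :
    Tendsto (fun M : ℕ => (∑ i ∈ range M, ((i : ℝ) + 1) ^ p) / (M : ℝ) ^ (p + 1)) atTop
      (𝓝 (p + 1)⁻¹) := by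
  have hq : 0 < p + 1 := by linarith
  have hMpos : ∀ᶠ M : ℕ in atTop, (0 : ℝ) < M := by
    filter_upwards [eventually_ge_atTop 1] with M hM using by exact_mod_cast hM
  have one : Tendsto (fun M : ℕ => (M : ℝ) ^ (p + 1) / (M : ℝ) ^ (p + 1)) atTop (𝓝 1) :=
    tendsto_const_nhds.congr' <| by
      filter_upwards [hMpos] with M hM using (div_self (rpow_pos_of_pos hM _).ne').symm
  have upper : Tendsto (fun M : ℕ => (((M : ℝ) + 1) ^ (p + 1) - 1) / (M : ℝ) ^ (p + 1)) atTop
      (𝓝 1) := by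
    have h : Tendsto (fun M : ℕ => (1 + (M : ℝ)⁻¹) ^ (p + 1) - ((M : ℝ) ^ (p + 1))⁻¹) atTop
        (𝓝 ((1 + 0) ^ (p + 1) - 0)) :=
      ((tendsto_const_nhds.add (tendsto_inv_atTop_zero.comp tendsto_natCast_atTop_atTop)).rpow_const
        (Or.inr hq.le)).sub (tendsto_inv_atTop_zero.comp
          ((tendsto_rpow_atTop hq).comp tendsto_natCast_atTop_atTop))
    rw [add_zero, one_rpow, sub_zero] at h
    refine h.congr' ?_
    filter_upwards [hMpos] with M hM
    rw [sub_div, one_div, ← div_rpow (by positivity) hM.le, add_div, div_self hM.ne', one_div]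
  have := (tendsto_of_mem_uIcc one upper (Eventually.of_forall fun M =>
    Set.image_div_const_uIcc ((M : ℝ) ^ (p + 1)) _ _ ▸
      Set.mem_image_of_mem _ (mul_sum_range_rpow_mem_uIcc hp M))).div_const (p + 1)
  rw [one_div] at this
  exact this.congr fun M => by field_simp

noncomputable def cutoff (α T : ℝ) : ℕ := ⌊(T⁻¹) ^ α⁻¹⌋₊

noncomputable def pinskerSum (γ α T : ℝ) : ℝ :=
  ∑' i : ℕ, ((i : ℝ) + 1) ^ γ * max (1 - T * ((i : ℝ) + 1) ^ α) 0

section Cutoff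

variable {α T : ℝ}

lemma lt_cutoff_iff (hα : 0 < α) (hT : 0 < T) {i : ℕ} :
    i < cutoff α T ↔ T * ((i : ℝ) + 1) ^ α ≤ 1 := by
  rw [cutoff, Nat.lt_iff_add_one_le, Nat.le_floor_iff (by positivity), Nat.cast_add_one,
    le_rpow_inv_iff_of_pos (by positivity) (by positivity) hα, ← one_div, le_div_iff₀' hT]

lemma max_one_sub_eq_zero_of_cutoff_le (hα : 0 < α) (hT : 0 < T) {i : ℕ}
    (hi : cutoff α T ≤ i) : max (1 - T * ((i : ℝ) + 1) ^ α) 0 = 0 :=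
  max_eq_right (by linarith [(not_congr (lt_cutoff_iff hα hT)).1 hi.not_gt])

lemma pinskerSum_eq (γ : ℝ) (hα : 0 < α) (hT : 0 < T) :
    pinskerSum γ α T = ∑ i ∈ range (cutoff α T), ((i : ℝ) + 1) ^ γ
      - T * ∑ i ∈ range (cutoff α T), ((i : ℝ) + 1) ^ (γ + α) := by
  rw [pinskerSum, tsum_eq_sum (s := range (cutoff α T)) fun i hi => by
    rw [max_one_sub_eq_zero_of_cutoff_le hα hT (by simpa using hi), mul_zero], mul_sum,
    ← sum_sub_distrib]
  refine sum_congr rfl fun i hi => ?_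
  rw [max_eq_left (by linarith [(lt_cutoff_iff hα hT).1 (mem_range.1 hi)]),
    rpow_add (by positivity)]
  ring

lemma pinskerSum_antitoneOn (γ : ℝ) (hα : 0 < α) : AntitoneOn (pinskerSum γ α) (Set.Ioi 0) := by
  intro T₁ hT₁ T₂ hT₂ hT
  have summable : ∀ T : ℝ, 0 < T →
      Summable fun i : ℕ => ((i : ℝ) + 1) ^ γ * max (1 - T * ((i : ℝ) + 1) ^ α) 0 :=
    fun T hT => summable_of_ne_finset_zero (s := range (cutoff α T)) fun i hi => by
      rw [max_one_sub_eq_zero_of_cutoff_le hα hT (by simpa using hi), mul_zero]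
  refine (summable T₂ hT₂).tsum_le_tsum (fun i => ?_) (summable T₁ hT₁)
  gcongr

lemma tendsto_cutoff_atTop (hα : 0 < α) : Tendsto (cutoff α) (𝓝[>] 0) atTop :=
  tendsto_nat_floor_atTop.comp ((tendsto_rpow_atTop (inv_pos.2 hα)).comp tendsto_inv_nhdsGT_zero)

lemma tendsto_rpow_inv_mul_cutoff (hα : 0 < α) :
    Tendsto (fun T => T ^ α⁻¹ * cutoff α T) (𝓝[>] 0) (𝓝 1) := by
  refine (tendsto_nat_floor_div_atTop.comp
    ((tendsto_rpow_atTop (inv_pos.2 hα)).comp tendsto_inv_nhdsGT_zero)).congr' ?_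
  filter_upwards [self_mem_nhdsWithin] with T (hT : 0 < T)
  simp only [Function.comp_apply, cutoff, inv_rpow hT.le, div_inv_eq_mul, mul_comm]

end Cutoff

section Asymptotics

variable {α : ℝ}

lemma tendsto_rpow_mul_sum_range_cutoff (hα : 0 < α) {p : ℝ} (hp : -1 < p) :
    Tendsto (fun T => T ^ ((p + 1) / α) * ∑ i ∈ range (cutoff α T), ((i : ℝ) + 1) ^ p)
      (𝓝[>] 0) (𝓝 (p + 1)⁻¹) := by
  have h := ((tendsto_rpow_inv_mul_cutoff hα).rpow_const (p := p + 1) (Or.inl one_ne_zero)).mul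
    ((tendsto_sum_range_rpow_div hp).comp (tendsto_cutoff_atTop hα))
  rw [one_rpow, one_mul] at h
  refine h.congr' ?_
  filter_upwards [self_mem_nhdsWithin, (tendsto_cutoff_atTop hα).eventually_gt_atTop 0]
    with T (hT : 0 < T) hN
  have hN' : (0 : ℝ) < cutoff α T := by exact_mod_cast hN
  rw [Function.comp_apply, mul_rpow (by positivity) hN'.le, ← rpow_mul hT.le, mul_assoc,
    mul_div_cancel₀ _ (rpow_pos_of_pos hN' _).ne', inv_mul_eq_div]

lemma tendsto_rpow_mul_pinskerSum (hα : 0 < α) {γ : ℝ} (hγ : -1 < γ) :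
    Tendsto (fun T => T ^ ((γ + 1) / α) * pinskerSum γ α T) (𝓝[>] 0)
      (𝓝 (α / ((γ + 1) * (γ + α + 1)))) := by
  have h := (tendsto_rpow_mul_sum_range_cutoff hα hγ).sub
    (tendsto_rpow_mul_sum_range_cutoff hα (p := γ + α) (by linarith))
  have hγ₁ : γ + 1 ≠ 0 := by linarith
  have hγ₂ : γ + α + 1 ≠ 0 := by linarith
  rw [show (γ + 1)⁻¹ - (γ + α + 1)⁻¹ = α / ((γ + 1) * (γ + α + 1)) by field_simp; ring] at h
  refine h.congr' ?_
  filter_upwards [self_mem_nhdsWithin] with T (hT : 0 < T)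
  rw [pinskerSum_eq γ hα hT, mul_sub, ← mul_assoc, ← rpow_add_one hT.ne',
    show (γ + 1) / α + 1 = (γ + α + 1) / α by field_simp; ring]

lemma tendsto_nhdsGT_zero_of_pinskerSum_eq (hα : 0 < α) {γ : ℝ} {t : ℝ → ℝ}
    (ht : ∀ n : ℝ, 0 < n → 0 < t n ∧ pinskerSum γ α (t n) = n * t n) :
    Tendsto t atTop (𝓝[>] 0) := by
  refine tendsto_nhdsWithin_iff.2 ⟨tendsto_order.2 ⟨fun a ha => ?_, fun ε hε => ?_⟩, ?_⟩
  · filter_upwards [eventually_gt_atTop 0] with n hn using ha.trans (ht n hn).1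
  · filter_upwards [eventually_gt_atTop (max 0 (pinskerSum γ α ε / ε))] with n hn
    obtain ⟨hn₀, hn⟩ := max_lt_iff.1 hn
    by_contra! hεt
    have : n * ε ≤ pinskerSum γ α ε := calc
      n * ε ≤ n * t n := by gcongr
      _ = pinskerSum γ α (t n) := (ht n hn₀).2.symm
      _ ≤ pinskerSum γ α ε := pinskerSum_antitoneOn γ hα hε (hε.trans_le hεt) hεt
    exact absurd ((div_lt_iff₀ hε).1 hn) this.not_gt
  · filter_upwards [eventually_gt_atTop 0] with n hn using (ht n hn).1

end Asymptotics

section Constants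

variable {α γ : ℝ}

lemma inv_mul_div_rpow_eq (hα : 0 < α) (hγ : -1 < γ) {n T A V : ℝ} (hn : 0 < n) (hT : 0 < T)
    (hV : V = n * T) :
    n⁻¹ * A / n ^ (-(2 * α) / (2 * α + γ + 1)) =
      T ^ ((γ + 1) / α) * A * (T ^ ((γ + α + 1) / α) * V) ^ (-(γ + 1) / (2 * α + γ + 1)) := by
  have hD : 0 < 2 * α + γ + 1 := by linarith
  have hTV : T ^ ((γ + α + 1) / α) * V = n * T ^ ((2 * α + γ + 1) / α) := by
    rw [hV, show (2 * α + γ + 1) / α = (γ + α + 1) / α + 1 by field_simp; ring,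
      rpow_add_one hT.ne']
    ring
  have hpow : (n * T ^ ((2 * α + γ + 1) / α)) ^ (-(γ + 1) / (2 * α + γ + 1)) =
      n ^ (-(γ + 1) / (2 * α + γ + 1)) * (T ^ ((γ + 1) / α))⁻¹ := by
    rw [mul_rpow hn.le (by positivity), ← rpow_mul hT.le, ← rpow_neg hT.le]
    congr 2
    field_simp
  have hn' : n ^ (-(γ + 1) / (2 * α + γ + 1)) * n ^ (-(2 * α) / (2 * α + γ + 1)) = n⁻¹ := by
    rw [← rpow_add hn, ← rpow_neg_one]
    congr 1
    field_simp
    ring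
  have : 0 < T ^ ((γ + 1) / α) := by positivity
  have : 0 < n ^ (-(γ + 1) / (2 * α + γ + 1)) := by positivity
  rw [hTV, hpow, ← hn']
  field_simp

lemma pinsker_constant_eq (hα : 0 < α) (hγ : -1 < γ) :
    α / ((γ + 1) * (γ + α + 1)) *
        (α / ((γ + α + 1) * (γ + α + α + 1))) ^ (-(γ + 1) / (2 * α + γ + 1)) =
      (2 * α + γ + 1) ^ ((γ + 1) / (2 * α + γ + 1)) / (γ + 1) *
        (α / (α + γ + 1)) ^ (2 * α / (2 * α + γ + 1)) := by
  have hD : 0 < 2 * α + γ + 1 := by linarith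
  have hx : 0 < α / (α + γ + 1) := div_pos hα (by linarith)
  have hc : α / ((γ + α + 1) * (γ + α + α + 1)) = α / (α + γ + 1) / (2 * α + γ + 1) := by
    rw [div_div]; ring_nf
  have he : 2 * α / (2 * α + γ + 1) = 1 + -((γ + 1) / (2 * α + γ + 1)) := by
    field_simp; ring
  rw [hc, div_rpow hx.le hD.le, he, rpow_add hx, rpow_one, neg_div, rpow_neg hD.le]
  have : 0 < (2 * α + γ + 1) ^ ((γ + 1) / (2 * α + γ + 1)) := by positivity
  have : 0 < (α / (α + γ + 1)) ^ ((γ + 1) / (2 * α + γ + 1)) := by positivity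
  rw [rpow_neg hx.le]
  field_simp
  ring

end Constants

/-- Pinsker-type sharp asymptotics for the Sobolev ellipsoid under uniform allocation:
if t(n) > 0 solves Σᵢ i^{2β+α}(1 − t(n) i^α)₊ = n t(n), then
R(n) = n⁻¹ Σᵢ i^{2β}(1 − t(n) i^α)₊ ∼ B̄_E n^{−2α/(2α+2β+1)} with
B̄_E = ((2α+2β+1)^{(2β+1)/(2α+2β+1)}/(2β+1)) (α/(α+2β+1))^{2α/(2α+2β+1)}. -/
theorem stmt18 (α β : ℝ) (hα : 0 < α) (hβ : -(1/2 : ℝ) < β)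
    (t : ℝ → ℝ)
    (ht : ∀ n : ℝ, 0 < n → 0 < t n ∧
      ∑' i : ℕ, ((i : ℝ) + 1) ^ (2*β + α) * max (1 - t n * ((i : ℝ) + 1) ^ α) 0
        = n * t n) :
    Tendsto (fun n : ℝ =>
        (n⁻¹ * ∑' i : ℕ, ((i : ℝ) + 1) ^ (2*β) * max (1 - t n * ((i : ℝ) + 1) ^ α) 0) /
          (((2*α+2*β+1) ^ ((2*β+1)/(2*α+2*β+1)) / (2*β+1)) *
            (α/(α+2*β+1)) ^ (2*α/(2*α+2*β+1)) * n ^ (-(2*α)/(2*α+2*β+1))))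
      atTop (nhds 1) := by
  have hγ : -1 < 2 * β := by linarith
  have htend : Tendsto t atTop (𝓝[>] 0) := tendsto_nhdsGT_zero_of_pinskerSum_eq hα ht
  have hu := (tendsto_rpow_mul_pinskerSum hα hγ).comp htend
  have hv := (tendsto_rpow_mul_pinskerSum hα (γ := 2 * β + α) (by linarith)).comp htend
  have hc : 0 < α / ((2 * β + α + 1) * (2 * β + α + α + 1)) :=
    div_pos hα (mul_pos (by linarith) (by linarith))
  have hB : 0 < (2*α+2*β+1) ^ ((2*β+1)/(2*α+2*β+1)) / (2*β+1) *
      (α/(α+2*β+1)) ^ (2*α/(2*α+2*β+1)) := by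
    have : 0 < 2*β+1 := by linarith
    have : 0 < α+2*β+1 := by linarith
    have : 0 < 2*α+2*β+1 := by linarith
    positivity
  have h := (hu.mul (hv.rpow_const (p := -(2 * β + 1) / (2 * α + 2 * β + 1))
    (Or.inl hc.ne'))).div_const
      ((2*α+2*β+1) ^ ((2*β+1)/(2*α+2*β+1)) / (2*β+1) * (α/(α+2*β+1)) ^ (2*α/(2*α+2*β+1)))
  rw [pinsker_constant_eq hα hγ, div_self hB.ne'] at h
  refine h.congr' ?_
  filter_upwards [eventually_gt_atTop 0] with n hn
  rw [Function.comp_apply, Function.comp_apply,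
    ← inv_mul_div_rpow_eq (V := pinskerSum (2 * β + α) α (t n)) hα hγ hn (ht n hn).1 (ht n hn).2,
    div_div, mul_comm (n ^ _)]
  rfl
end
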